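/- Let C be a category with terminal object such that C^∞ = C^{N^op} is S-enriched. Every locally contractive S-enriched endofunctor F : C^∞ → C^∞ has a fixed point: there exists an object Ω of C^∞ and an isomorphism FΩ ≅ Ω. Moreover Ω may be taken to be the diagonal Ω(n) = F^{n+1}(T)(n), where T is the terminal object of C^∞. -/

import Mathlib

open CategoryTheory CategoryTheory.Limits

universe v u

/-- An object of `C^∞ = C^{ℕᵒᵖ}`: a cochain `X(0) ← X(1) ← X(2) ← ⋯` in `C`. -/
structure GObj (C : Type u) [Category.{v} C] where
  obj : ℕ → C
  res : ∀ n, obj (n + 1) ⟶ obj n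

namespace GObj

variable {C : Type u} [Category.{v} C]

/-- A morphism in `C^∞`: a natural transformation between cochains. -/
@[ext]
structure GHom (X Y : GObj C) where
  app : ∀ n, X.obj n ⟶ Y.obj n
  nat : ∀ n, X.res n ≫ app n = app (n + 1) ≫ Y.res n

instance : Category (GObj C) where
  Hom := GHom
  id X := { app := fun _ => 𝟙 _, nat := by intro n; simp }
  comp {X Y Z} f g :=
    { app := fun n => f.app n ≫ g.app n
      nat := by
        intro n
        rw [← Category.assoc, f.nat, Category.assoc, g.nat, ← Category.assoc] }
  id_comp f := by apply GHom.ext; funext n; simp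
  comp_id f := by apply GHom.ext; funext n; simp
  assoc f g h := by apply GHom.ext; funext n; simp

@[simp] theorem id_app (X : GObj C) (n : ℕ) : (𝟙 X : X ⟶ X).app n = 𝟙 (X.obj n) := rfl

@[simp] theorem comp_app {X Y Z : GObj C} (f : X ⟶ Y) (g : Y ⟶ Z) (n : ℕ) :
    (f ≫ g).app n = f.app n ≫ g.app n := rfl

/-- The constant cochain on an object of `C`. -/
def constG (T : C) : GObj C where
  obj _ := T
  res _ := 𝟙 T

end GObj

namespace GObj

variable {C : Type u} [Category.{v} C]

/-- A truncated natural transformation `(f_0, …, f_n)` from `X` to `Y`. -/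
@[ext]
structure TruncHom (X Y : GObj C) (n : ℕ) where
  app : ∀ k, k ≤ n → (X.obj k ⟶ Y.obj k)
  nat : ∀ k (h : k + 1 ≤ n),
    X.res k ≫ app k (Nat.le_of_succ_le h) = app (k + 1) h ≫ Y.res k

/-- Restriction of truncated natural transformations: forget the last component. -/
def tres {X Y : GObj C} {n : ℕ} (f : TruncHom X Y (n + 1)) : TruncHom X Y n where
  app k h := f.app k (h.trans (Nat.le_succ n))
  nat k h := f.nat k (h.trans (Nat.le_succ n))

/-- The truncated identity natural transformation. -/
def tid (X : GObj C) (n : ℕ) : TruncHom X X n where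
  app k _ := 𝟙 (X.obj k)
  nat k _ := by simp

/-- Componentwise composition of truncated natural transformations. -/
def tcomp {X Y Z : GObj C} {n : ℕ} (g : TruncHom Y Z n) (f : TruncHom X Y n) :
    TruncHom X Z n where
  app k h := f.app k h ≫ g.app k h
  nat k h := by
    rw [← Category.assoc, f.nat k h, Category.assoc, g.nat k h, ← Category.assoc]

/-- The truncation of a (global) morphism of `C^∞`. -/
def trunc {X Y : GObj C} (f : X ⟶ Y) (n : ℕ) : TruncHom X Y n where
  app k _ := f.app k
  nat k _ := f.nat k

/-- The hom-object of the `S`-enrichment of `C^∞`: an object of the topos of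
trees `S = Set^{ℕᵒᵖ}` whose `n`-th component is the set of truncated natural
transformations of length `n`, with restriction forgetting the last component. -/
def homObj (X Y : GObj C) : GObj (Type v) where
  obj n := TruncHom X Y n
  res _ := TypeCat.ofHom tres

end GObj

namespace GObj

/-- Object part of the later functor on the topos of trees. -/
def LaterTObj (A : GObj (Type u)) : ℕ → Type u
  | 0 => PUnit
  | n + 1 => A.obj n

/-- The later functor `L : S → S` on (objects of) the topos of trees. -/
def LaterT (A : GObj (Type u)) : GObj (Type u) where
  obj := LaterTObj A
  res n :=
    match n with
    | 0 => TypeCat.ofHom fun _ => PUnit.unit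
    | n + 1 => A.res n

/-- The `next` natural transformation `ν_A : A → L A` in the topos of trees. -/
def nextT (A : GObj (Type u)) : A ⟶ LaterT A where
  app n :=
    match n with
    | 0 => TypeCat.ofHom fun _ => PUnit.unit
    | n + 1 => A.res n
  nat n := by
    cases n with
    | zero => rfl
    | succ n => rfl

/-- Pointwise cartesian product in the topos of trees. -/
def GProd (A B : GObj (Type u)) : GObj (Type u) where
  obj n := A.obj n × B.obj n
  res n := TypeCat.ofHom fun p => (A.res n p.1, B.res n p.2)

/-- Pairing for the pointwise cartesian product. -/
def gpair {Z A B : GObj (Type u)} (f : Z ⟶ A) (g : Z ⟶ B) : Z ⟶ GProd A B where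
  app n := TypeCat.ofHom fun z => (f.app n z, g.app n z)
  nat n := by
    ext z
    refine Prod.ext ?_ ?_
    · exact types_congr_hom (f.nat n) z
    · exact types_congr_hom (g.nat n) z

/-- Evaluation `[A → B] × A → B` for the exponential `[A → B] = homObj A B`
in the topos of trees. -/
def gev (A B : GObj (Type u)) : GProd (homObj A B) A ⟶ B where
  app n := TypeCat.ofHom fun p => p.1.app n (le_refl n) p.2
  nat n := by
    ext p
    exact ConcreteCategory.congr_hom (p.1.nat n (le_refl (n + 1))) p.2

end GObj

namespace GObj

variable {C : Type u} [Category.{v} C]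

/-- An `S`-enriched endofunctor of `C^∞`: a functor together with its action on
the hom-objects of the enrichment in the topos of trees (a morphism in `S`,
compatible with enriched identities and composition, and with the underlying
functor). -/
structure EnrFunctor (C : Type u) [Category.{v} C] where
  F : GObj C ⥤ GObj C
  Φ : ∀ (X Y : GObj C) (n : ℕ), TruncHom X Y n → TruncHom (F.obj X) (F.obj Y) n
  Φ_res : ∀ (X Y : GObj C) (n : ℕ) (f : TruncHom X Y (n + 1)),
    tres (Φ X Y (n + 1) f) = Φ X Y n (tres f)
  Φ_id : ∀ (X : GObj C) (n : ℕ), Φ X X n (tid X n) = tid (F.obj X) n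
  Φ_comp : ∀ (X Y Z : GObj C) (n : ℕ) (g : TruncHom Y Z n) (f : TruncHom X Y n),
    Φ X Z n (tcomp g f) = tcomp (Φ Y Z n g) (Φ X Y n f)
  Φ_map : ∀ (X Y : GObj C) (f : X ⟶ Y) (n : ℕ), Φ X Y n (trunc f n) = trunc (F.map f) n

/-- A locally contractive `S`-enriched endofunctor: the action on hom-objects
factorises through the `next` natural transformation `ν : id ⇒ L` of `S`
via a family `G` which is itself a morphism in `S` and behaves like a functor
(compatibly with enriched identities and composition). -/
def EnrFunctor.LocallyContractive (E : EnrFunctor C) : Prop :=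
  ∃ G : ∀ (X Y : GObj C) (n : ℕ),
      (LaterT (homObj X Y)).obj n → TruncHom (E.F.obj X) (E.F.obj Y) n,
    (∀ (X Y : GObj C) (f : TruncHom X Y 0), E.Φ X Y 0 f = G X Y 0 PUnit.unit) ∧
    (∀ (X Y : GObj C) (n : ℕ) (f : TruncHom X Y (n + 1)),
      E.Φ X Y (n + 1) f = G X Y (n + 1) (tres f)) ∧
    (∀ (X Y : GObj C) (n : ℕ) (x : (LaterT (homObj X Y)).obj (n + 1)),
      tres (G X Y (n + 1) x) = G X Y n ((LaterT (homObj X Y)).res n x)) ∧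
    (∀ X : GObj C, G X X 0 PUnit.unit = tid (E.F.obj X) 0) ∧
    (∀ (X : GObj C) (n : ℕ), G X X (n + 1) (tid X n) = tid (E.F.obj X) (n + 1)) ∧
    (∀ (X Y Z : GObj C) (u : PUnit),
      G X Z 0 u = tcomp (G Y Z 0 u) (G X Y 0 u)) ∧
    (∀ (X Y Z : GObj C) (n : ℕ) (g : TruncHom Y Z n) (f : TruncHom X Y n),
      G X Z (n + 1) (tcomp g f) = tcomp (G Y Z (n + 1) g) (G X Y (n + 1) f))

/-- `α : X ⟶ Y` is an `n`-isomorphism if its first `n` components are isomorphisms. -/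
def IsNIso {X Y : GObj C} (α : X ⟶ Y) (n : ℕ) : Prop :=
  ∀ k, k < n → IsIso (α.app k)

/-- Composition of `S`-enriched endofunctors. -/
def EnrFunctor.comp (F G : EnrFunctor C) : EnrFunctor C where
  F := G.F ⋙ F.F
  Φ X Y n f := F.Φ _ _ n (G.Φ X Y n f)
  Φ_res := by intro X Y n f; rw [F.Φ_res, G.Φ_res]
  Φ_id := by intro X n; rw [G.Φ_id, F.Φ_id]; rfl
  Φ_comp := by intro X Y Z n g f; rw [G.Φ_comp, F.Φ_comp]
  Φ_map := by intro X Y f n; rw [G.Φ_map, F.Φ_map]; rfl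

end GObj


/-!
Write `X_m = F^m(T)` and `p_m : X_{m+1} ⟶ X_m` for the terminal sequence. A locally contractive
functor turns `n`-isomorphisms into `(n+1)`-isomorphisms: below level `n + 1` its action on `α`
only depends on `α` below level `n`, where `α` has an inverse. By induction `p_m` is an
`m`-isomorphism, so at level `n` the tower `X_•(n)` is constant up to isomorphism from index `n + 1`
on. The diagonal `Ω(n) = X_{n+1}(n)` then carries projections `π_m : Ω ⟶ X_m` (at level `n`: up the
stable part of the tower to `X_s(n)`, `s = max m (n + 1)`, then down to `X_m(n)`) which are
`m`-isomorphisms with `π_n = π_{n+1} ≫ p_n`. Hence the components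
`(F π_n)(n) : (F Ω)(n) ⟶ X_{n+1}(n) = Ω(n)` are invertible and natural in `n`.
-/

namespace GObj

open Opposite

variable {C : Type u} [Category.{v} C]

theorem isIso_of_isIso_app {X Y : GObj C} (f : X ⟶ Y) (h : ∀ n, IsIso (f.app n)) : IsIso f :=
  ⟨⟨{ app := fun n => inv (f.app n)
      nat := fun n => by
        rw [IsIso.eq_inv_comp, ← Category.assoc, ← f.nat n, Category.assoc, IsIso.hom_inv_id,
          Category.comp_id] },
    GHom.ext (funext fun n => IsIso.hom_inv_id (f.app n)),
    GHom.ext (funext fun n => IsIso.inv_hom_id (f.app n))⟩⟩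

def isTerminalConstG {T : C} (hT : IsTerminal T) : IsTerminal (constG T) :=
  IsTerminal.ofUniqueHom (fun _ => ⟨fun _ => hT.from _, fun _ => hT.hom_ext _ _⟩)
    (fun _ _ => GHom.ext (funext fun _ => hT.hom_ext _ _))

section LocallyContractive

variable {X Y : GObj C}

theorem TruncHom.isIso_app_of_tcomp_eq_tid {n : ℕ} {f : TruncHom X Y n} {g : TruncHom Y X n}
    (hgf : tcomp g f = tid X n) (hfg : tcomp f g = tid Y n) (k : ℕ) (hk : k ≤ n) :
    IsIso (f.app k hk) :=
  ⟨g.app k hk, congrArg (fun t => t.app k hk) hgf, congrArg (fun t => t.app k hk) hfg⟩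

noncomputable def truncInv (α : X ⟶ Y) {n : ℕ} (h : IsNIso α (n + 1)) : TruncHom Y X n where
  app k hk := haveI := h k (Nat.lt_succ_of_le hk); inv (α.app k)
  nat k hk := by
    have := h k (by omega)
    have := h (k + 1) (by omega)
    rw [IsIso.eq_inv_comp, ← Category.assoc, ← α.nat k, Category.assoc, IsIso.hom_inv_id,
      Category.comp_id]

theorem tcomp_truncInv_trunc (α : X ⟶ Y) {n : ℕ} (h : IsNIso α (n + 1)) :
    tcomp (truncInv α h) (trunc α n) = tid X n :=
  TruncHom.ext (funext fun k => funext fun hk =>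
    haveI := h k (Nat.lt_succ_of_le hk); IsIso.hom_inv_id (α.app k))

theorem tcomp_trunc_truncInv (α : X ⟶ Y) {n : ℕ} (h : IsNIso α (n + 1)) :
    tcomp (trunc α n) (truncInv α h) = tid Y n :=
  TruncHom.ext (funext fun k => funext fun hk =>
    haveI := h k (Nat.lt_succ_of_le hk); IsIso.inv_hom_id (α.app k))

theorem EnrFunctor.LocallyContractive.isNIso_map {E : EnrFunctor C} (hE : E.LocallyContractive)
    (α : X ⟶ Y) {n : ℕ} (h : IsNIso α n) : IsNIso (E.F.map α) (n + 1) := by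
  obtain ⟨G, hG0, hGs, -, hid0, hids, hcomp0, hcomps⟩ := hE
  intro k hk
  have hΦ : (E.F.map α).app k = (E.Φ X Y n (trunc α n)).app k (Nat.le_of_lt_succ hk) := by
    rw [E.Φ_map]; rfl
  rw [hΦ]
  cases n with
  | zero =>
    rw [hG0]
    exact TruncHom.isIso_app_of_tcomp_eq_tid (g := G Y X 0 PUnit.unit)
      (by rw [← hcomp0, hid0]) (by rw [← hcomp0, hid0]) k _
  | succ m =>
    rw [hGs]
    change IsIso ((G X Y (m + 1) (trunc α m)).app k _)
    exact TruncHom.isIso_app_of_tcomp_eq_tid (g := G Y X (m + 1) (truncInv α h))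
      (by rw [← hcomps, tcomp_truncInv_trunc, hids])
      (by rw [← hcomps, tcomp_trunc_truncInv, hids]) k _

end LocallyContractive

section Tower

variable {X : ℕ → GObj C} (p : ∀ m, X (m + 1) ⟶ X m)

def towerHom {a b : ℕ} (h : a ≤ b) : X b ⟶ X a :=
  (Functor.ofOpSequence p).map (homOfLE h).op

theorem towerHom_refl (a : ℕ) : towerHom p (le_refl a) = 𝟙 (X a) :=
  (Functor.ofOpSequence p).map_id (op a)

theorem towerHom_succ (m : ℕ) : towerHom p (Nat.le_succ m) = p m :=
  Functor.ofOpSequence_map_homOfLE_succ p m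

theorem towerHom_comp {a b c : ℕ} (hab : a ≤ b) (hbc : b ≤ c) :
    towerHom p hbc ≫ towerHom p hab = towerHom p (hab.trans hbc) :=
  ((Functor.ofOpSequence p).map_comp _ _).symm

theorem towerHom_comp_app {a b c : ℕ} (hab : a ≤ b) (hbc : b ≤ c) (n : ℕ) :
    (towerHom p hbc).app n ≫ (towerHom p hab).app n = (towerHom p (hab.trans hbc)).app n := by
  rw [← comp_app, towerHom_comp]

variable {p}

theorem isNIso_towerHom (hp : ∀ m, IsNIso (p m) m) {a b : ℕ} (h : a ≤ b) :
    IsNIso (towerHom p h) a := by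
  induction b, h using Nat.le_induction with
  | base =>
    intro k _
    rw [towerHom_refl, id_app]
    infer_instance
  | succ b hab ih =>
    intro k hk
    rw [← towerHom_comp_app p hab (Nat.le_succ b), towerHom_succ]
    have := hp b k (by omega)
    have := ih k hk
    infer_instance

variable (p)

abbrev diag : GObj C where
  obj n := (X (n + 1)).obj n
  res n := (X (n + 2)).res n ≫ (p (n + 1)).app n

variable {p} (hp : ∀ m, IsNIso (p m) m)

noncomputable def diagπApp (m n : ℕ) : (X (n + 1)).obj n ⟶ (X m).obj n :=
  haveI := isNIso_towerHom hp (le_max_right m (n + 1)) n n.lt_succ_self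
  inv ((towerHom p (le_max_right m (n + 1))).app n) ≫ (towerHom p (le_max_left m (n + 1))).app n

theorem towerHom_comp_diagπApp {m n s : ℕ} (hn : n + 1 ≤ s) (hm : m ≤ s) :
    (towerHom p hn).app n ≫ diagπApp hp m n = (towerHom p hm).app n := by
  have hs₀ := le_max_right m (n + 1)
  have hm₀ := le_max_left m (n + 1)
  have stable : ∀ {t} (ht : max m (n + 1) ≤ t),
      (towerHom p (hs₀.trans ht)).app n ≫ diagπApp hp m n = (towerHom p (hm₀.trans ht)).app n := by
    intro t ht
    rw [← towerHom_comp_app p hs₀ ht, ← towerHom_comp_app p hm₀ ht, Category.assoc, diagπApp,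
      IsIso.hom_inv_id_assoc]
  have ht := le_max_left s (max m (n + 1))
  have := isNIso_towerHom hp ht n (by omega)
  rw [← cancel_epi ((towerHom p ht).app n), ← Category.assoc, towerHom_comp_app,
    towerHom_comp_app]
  exact stable (le_max_right _ _)

theorem diagπApp_nat (m n : ℕ) :
    (diag p).res n ≫ diagπApp hp m n = diagπApp hp m (n + 1) ≫ (X m).res n := by
  have hs := le_max_right m (n + 2)
  have hm := le_max_left m (n + 2)
  have := isNIso_towerHom hp hs (n + 1) (by omega)
  dsimp only [diag]
  rw [← cancel_epi ((towerHom p hs).app (n + 1)), ← Category.assoc _ (diagπApp hp m _),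
    towerHom_comp_diagπApp hp hs hm, ← (towerHom p hm).nat n, ← towerHom_succ p (n + 1),
    Category.assoc, ← reassoc_of% ((towerHom p hs).nat n), reassoc_of% towerHom_comp_app,
    towerHom_comp_diagπApp]

noncomputable def diagπ (m : ℕ) : diag p ⟶ X m where
  app := diagπApp hp m
  nat := diagπApp_nat hp m

theorem diagπ_comp (m : ℕ) : diagπ hp (m + 1) ≫ p m = diagπ hp m := by
  refine GHom.ext (funext fun n => ?_)
  have hs := le_max_right (m + 1) (n + 1)
  have hm := le_max_left (m + 1) (n + 1)
  have := isNIso_towerHom hp hs n n.lt_succ_self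
  change diagπApp hp (m + 1) n ≫ (p m).app n = diagπApp hp m n
  rw [← cancel_epi ((towerHom p hs).app n), reassoc_of% towerHom_comp_diagπApp hp hs hm, ← towerHom_succ p m, towerHom_comp_app,
    towerHom_comp_diagπApp]

theorem isNIso_diagπ (m : ℕ) : IsNIso (diagπ hp m) m := by
  intro n hn
  have hs := le_max_right m (n + 1)
  have hm := le_max_left m (n + 1)
  have := isNIso_towerHom hp hs n n.lt_succ_self
  have : IsIso ((towerHom p hs).app n ≫ diagπApp hp m n) := by
    rw [towerHom_comp_diagπApp hp hs hm]
    exact isNIso_towerHom hp hm n hn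
  exact IsIso.of_isIso_comp_left ((towerHom p hs).app n) (diagπApp hp m n)

end Tower

section TerminalSeq

variable {T : C}

abbrev terminalSeq (T : C) (E : EnrFunctor C) : ℕ → GObj C
  | 0 => constG T
  | m + 1 => E.F.obj (terminalSeq T E m)

theorem terminalSeq_eq_iterate (E : EnrFunctor C) (m : ℕ) :
    terminalSeq T E m = E.F.obj^[m] (constG T) := by
  induction m with
  | zero => rfl
  | succ m ih => rw [Function.iterate_succ_apply', ← ih]

def terminalSeqMap (hT : IsTerminal T) (E : EnrFunctor C) :
    ∀ m, terminalSeq T E (m + 1) ⟶ terminalSeq T E m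
  | 0 => (isTerminalConstG hT).from _
  | m + 1 => E.F.map (terminalSeqMap hT E m)

theorem isNIso_terminalSeqMap (hT : IsTerminal T) {E : EnrFunctor C}
    (hE : E.LocallyContractive) : ∀ m, IsNIso (terminalSeqMap hT E m) m
  | 0 => fun _ hk => absurd hk (Nat.not_lt_zero _)
  | m + 1 => hE.isNIso_map (terminalSeqMap hT E m) (isNIso_terminalSeqMap hT hE m)

noncomputable def fixedPointHom (hT : IsTerminal T) {E : EnrFunctor C}
    (hE : E.LocallyContractive) :
    E.F.obj (diag (terminalSeqMap hT E)) ⟶ diag (terminalSeqMap hT E) where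
  app n := (E.F.map (diagπ (isNIso_terminalSeqMap hT hE) n)).app n
  nat n := by
    rw [← diagπ_comp (isNIso_terminalSeqMap hT hE) n, E.F.map_comp, comp_app,
      ← Category.assoc, (E.F.map _).nat n, Category.assoc]
    rfl

theorem isIso_fixedPointHom (hT : IsTerminal T) {E : EnrFunctor C}
    (hE : E.LocallyContractive) : IsIso (fixedPointHom hT hE) :=
  isIso_of_isIso_app _ fun n =>
    hE.isNIso_map _ (isNIso_diagπ (isNIso_terminalSeqMap hT hE) n) n n.lt_succ_self

end TerminalSeq

end GObj

open GObj in
/-- **Fixed points of locally contractive functors.** Every locally contractive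
`S`-enriched endofunctor of `C^∞` has a fixed point `Ω` (an object together
with an isomorphism `F Ω ≅ Ω`), and `Ω` may be taken to be the diagonal of the
terminal sequence, with `Ω(n) = F^{n+1}(T)(n)`. -/
theorem locally_contractive_has_fixed_point {C : Type u} [Category.{v} C]
    {T : C} (hT : IsTerminal T)
    (E : EnrFunctor C) (hE : E.LocallyContractive) :
    ∃ Ω : GObj C, Nonempty (E.F.obj Ω ≅ Ω) ∧
      ∀ n, Ω.obj n = ((E.F.obj)^[n + 1] (constG T)).obj n := by
  have := isIso_fixedPointHom hT hE
  exact ⟨diag (terminalSeqMap hT E), ⟨asIso (fixedPointHom hT hE)⟩,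
    fun n => by rw [← terminalSeq_eq_iterate]⟩
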